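/- arXiv:2311.06768 — 4 statements merged into one kernel-verified Lean document; each statement's English description precedes it below -/
import Mathlib

section
/- Let $K:\mathbb{R}^3\times\mathbb{R}^3\to\mathbb{C}$ satisfy $|K(x,y)|\lesssim \langle x\rangle^{-1}\langle y\rangle^{-1}\langle |x|-|y|\rangle^{-2}$, and let $K_1(x,y)=K(x,y)\chi_{\{\frac12|x|\le |y|\le 2|x|\}}$. Then $\sup_x \int |K_1(x,y)|\,dy + \sup_y \int |K_1(x,y)|\,dx < \infty$; in particular $T_{K_1}$ is bounded on $L^p(\mathbb{R}^3)$ for all $1\le p\le \infty$. -/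
open MeasureTheory Real
open scoped ENNReal NNReal

noncomputable section

abbrev E3 := EuclideanSpace ℝ (Fin 3)

/-- Japanese bracket `⟨x⟩ = (1+|x|²)^{1/2}` of a point of `ℝ³`. -/
def jb (x : E3) : ℝ := Real.sqrt (1 + ‖x‖ ^ 2)

/-- Japanese bracket of a real number. -/
def jbR (s : ℝ) : ℝ := Real.sqrt (1 + s ^ 2)

/-!
On the region `½|x| ≤ |y| ≤ 2|x|` the brackets `⟨x⟩` and `⟨y⟩` are comparable, and
`|y|² ⟨x⟩⁻¹ ⟨y⟩⁻¹ ≤ 2`. In polar coordinates the `y`-integral of `|K₁(x, ·)|` is therefore at most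
`2C |S²| ∫ ⟨|x| - r⟩⁻² dr = 2Cπ |S²|`, and since the region and the bound are symmetric in `x` and
`y`, the same holds for the `x`-integrals. Schur's test (Hölder's inequality with the kernel as a
weight, followed by Tonelli) turns these two uniform bounds into boundedness on every `Lᵖ`.
-/

open Set

section SchurTest

variable {α β 𝕜 : Type*} [MeasurableSpace α] [MeasurableSpace β] {μ : Measure α} {ν : Measure β}
  [RCLike 𝕜] {k : α → β → 𝕜} {M : ℝ≥0∞}

theorem rpow_lintegral_mul_le {w g : β → ℝ≥0∞} (hw : AEMeasurable w ν) (hg : AEMeasurable g ν)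
    (hM : ∫⁻ y, w y ∂ν ≤ M) {p : ℝ} (hp : 1 ≤ p) :
    (∫⁻ y, w y * g y ∂ν) ^ p ≤ M ^ (p - 1) * ∫⁻ y, w y * g y ^ p ∂ν := by
  have hp0 : 0 < p := zero_lt_one.trans_le hp
  have hg' : AEMeasurable g (ν.withDensity w) := hg.mono_ac (withDensity_absolutelyContinuous _ _)
  have holder := eLpNorm_le_eLpNorm_mul_rpow_measure_univ (μ := ν.withDensity w)
    (ENNReal.one_le_ofReal.2 hp) hg'.aestronglyMeasurable
  rw [eLpNorm_one_eq_lintegral_enorm, eLpNorm_eq_lintegral_rpow_enorm_toReal (by simpa using hp0)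
    ENNReal.ofReal_ne_top] at holder
  simp only [enorm_eq_self, ENNReal.toReal_ofReal hp0.le, ENNReal.toReal_one,
    withDensity_apply _ MeasurableSet.univ, Measure.restrict_univ,
    lintegral_withDensity_eq_lintegral_mul₀ hw hg,
    lintegral_withDensity_eq_lintegral_mul₀ hw (hg.pow_const p), Pi.mul_apply] at holder
  calc (∫⁻ y, w y * g y ∂ν) ^ p
      ≤ ((∫⁻ y, w y * g y ^ p ∂ν) ^ (1 / p) * (∫⁻ y, w y ∂ν) ^ (1 / 1 - 1 / p)) ^ p := by
        gcongr
    _ = (∫⁻ y, w y ∂ν) ^ (p - 1) * ∫⁻ y, w y * g y ^ p ∂ν := by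
      rw [ENNReal.mul_rpow_of_nonneg _ _ hp0.le, ← ENNReal.rpow_mul, ← ENNReal.rpow_mul,
        one_div_mul_cancel hp0.ne', ENNReal.rpow_one, mul_comm]
      congr 2
      field_simp
    _ ≤ M ^ (p - 1) * ∫⁻ y, w y * g y ^ p ∂ν := by gcongr

theorem enorm_integral_mul_le_lintegral (g f : β → 𝕜) :
    ‖∫ y, g y * f y ∂ν‖ₑ ≤ ∫⁻ y, ‖g y‖ₑ * ‖f y‖ₑ ∂ν := by
  simpa only [enorm_mul] using enorm_integral_le_lintegral_enorm (fun y => g y * f y)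

theorem eLpNorm_top_integral_kernel_le (hk : Measurable (Function.uncurry k))
    (hrow : ∀ x, ∫⁻ y, ‖k x y‖ₑ ∂ν ≤ M) (f : β → 𝕜) :
    eLpNorm (fun x => ∫ y, k x y * f y ∂ν) ∞ μ ≤ M * eLpNorm f ∞ ν := by
  rw [eLpNorm_exponent_top, eLpNorm_exponent_top]
  refine essSup_le_of_ae_le _ (ae_of_all _ fun x => ?_)
  calc ‖∫ y, k x y * f y ∂ν‖ₑ ≤ ∫⁻ y, ‖k x y‖ₑ * ‖f y‖ₑ ∂ν := enorm_integral_mul_le_lintegral _ _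
    _ ≤ ∫⁻ y, ‖k x y‖ₑ * eLpNormEssSup f ν ∂ν :=
      lintegral_mono_ae ((enorm_ae_le_eLpNormEssSup f ν).mono fun y hy => by gcongr)
    _ = (∫⁻ y, ‖k x y‖ₑ ∂ν) * eLpNormEssSup f ν := lintegral_mul_const _ hk.of_uncurry_left.enorm
    _ ≤ M * eLpNormEssSup f ν := by gcongr; exact hrow x

theorem lintegral_rpow_integral_kernel_le [SFinite μ] [SFinite ν]
    (hk : Measurable (Function.uncurry k))
    (hrow : ∀ x, ∫⁻ y, ‖k x y‖ₑ ∂ν ≤ M) (hcol : ∀ y, ∫⁻ x, ‖k x y‖ₑ ∂μ ≤ M)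
    {f : β → 𝕜} (hf : AEStronglyMeasurable f ν) {p : ℝ} (hp : 1 ≤ p) :
    ∫⁻ x, ‖∫ y, k x y * f y ∂ν‖ₑ ^ p ∂μ ≤ M ^ p * ∫⁻ y, ‖f y‖ₑ ^ p ∂ν := by
  have hkf : AEMeasurable (Function.uncurry fun x y => ‖k x y‖ₑ * ‖f y‖ₑ ^ p) (μ.prod ν) :=
    hk.enorm.aemeasurable.mul (hf.enorm.pow_const p).comp_snd
  calc ∫⁻ x, ‖∫ y, k x y * f y ∂ν‖ₑ ^ p ∂μ
      ≤ ∫⁻ x, (∫⁻ y, ‖k x y‖ₑ * ‖f y‖ₑ ∂ν) ^ p ∂μ :=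
        lintegral_mono fun x => by gcongr; exact enorm_integral_mul_le_lintegral _ _
    _ ≤ ∫⁻ x, M ^ (p - 1) * ∫⁻ y, ‖k x y‖ₑ * ‖f y‖ₑ ^ p ∂ν ∂μ :=
        lintegral_mono fun x => rpow_lintegral_mul_le
          hk.of_uncurry_left.enorm.aemeasurable hf.enorm (hrow x) hp
    _ = M ^ (p - 1) * ∫⁻ y, (∫⁻ x, ‖k x y‖ₑ ∂μ) * ‖f y‖ₑ ^ p ∂ν := by
        rw [lintegral_const_mul'' _ (by exact hkf.lintegral_prod_right'),
          lintegral_lintegral_swap hkf]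
        simp_rw [lintegral_mul_const _ hk.of_uncurry_right.enorm]
    _ ≤ M ^ (p - 1) * ∫⁻ y, M * ‖f y‖ₑ ^ p ∂ν := by gcongr with y; exact hcol y
    _ = M ^ p * ∫⁻ y, ‖f y‖ₑ ^ p ∂ν := by
        rw [lintegral_const_mul'' _ (hf.enorm.pow_const p), ← mul_assoc]
        congr 1
        nth_rw 2 [← ENNReal.rpow_one M]
        rw [← ENNReal.rpow_add_of_nonneg _ _ (by linarith) zero_le_one, sub_add_cancel]

/-- **Schur's test**. -/
theorem eLpNorm_integral_kernel_le [SFinite μ] [SFinite ν] (hk : Measurable (Function.uncurry k))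
    (hrow : ∀ x, ∫⁻ y, ‖k x y‖ₑ ∂ν ≤ M) (hcol : ∀ y, ∫⁻ x, ‖k x y‖ₑ ∂μ ≤ M)
    {f : β → 𝕜} (hf : AEStronglyMeasurable f ν) {p : ℝ≥0∞} (hp : 1 ≤ p) :
    eLpNorm (fun x => ∫ y, k x y * f y ∂ν) p μ ≤ M * eLpNorm f p ν := by
  obtain rfl | hp_top := eq_or_ne p ∞
  · exact eLpNorm_top_integral_kernel_le hk hrow f
  have hp0 : p ≠ 0 := (zero_lt_one.trans_le hp).ne'
  have hr : 1 ≤ p.toReal := by simpa using ENNReal.toReal_mono hp_top hp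
  have hr0 : 0 < p.toReal := zero_lt_one.trans_le hr
  rw [eLpNorm_eq_lintegral_rpow_enorm_toReal hp0 hp_top,
    eLpNorm_eq_lintegral_rpow_enorm_toReal hp0 hp_top]
  calc (∫⁻ x, ‖∫ y, k x y * f y ∂ν‖ₑ ^ p.toReal ∂μ) ^ (1 / p.toReal)
      ≤ (M ^ p.toReal * ∫⁻ y, ‖f y‖ₑ ^ p.toReal ∂ν) ^ (1 / p.toReal) := by
        gcongr; exact lintegral_rpow_integral_kernel_le hk hrow hcol hf hr
    _ = M * (∫⁻ y, ‖f y‖ₑ ^ p.toReal ∂ν) ^ (1 / p.toReal) := by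
        rw [ENNReal.mul_rpow_of_nonneg _ _ (by positivity), ← ENNReal.rpow_mul,
          mul_one_div_cancel hr0.ne', ENNReal.rpow_one]

end SchurTest

theorem lintegral_fun_norm_addHaar {E : Type*} [NormedAddCommGroup E] [NormedSpace ℝ E]
    [MeasurableSpace E] [BorelSpace E] [FiniteDimensional ℝ E] [Nontrivial E]
    (μ : Measure E) [μ.IsAddHaarMeasure] {f : ℝ → ℝ≥0∞} (hf : Measurable f) :
    ∫⁻ x, f ‖x‖ ∂μ = μ.toSphere univ *
      ∫⁻ r in Ioi (0 : ℝ), ENNReal.ofReal (r ^ (Module.finrank ℝ E - 1)) * f r := by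
  have hf' : Measurable fun x : Metric.sphere (0 : E) 1 × Ioi (0 : ℝ) => f x.2 :=
    hf.comp (measurable_subtype_coe.comp measurable_snd)
  calc ∫⁻ x, f ‖x‖ ∂μ = ∫⁻ x : ({(0 : E)}ᶜ : Set E), f ‖(x : E)‖ ∂(μ.comap Subtype.val) := by
        rw [lintegral_subtype_comap (measurableSet_singleton _).compl (fun x => f ‖x‖),
          restrict_compl_singleton]
    _ = ∫⁻ x, f x.2 ∂(μ.toSphere.prod (Measure.volumeIoiPow (Module.finrank ℝ E - 1))) := by
        simpa using μ.measurePreserving_homeomorphUnitSphereProd.lintegral_comp hf'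
    _ = μ.toSphere univ * ∫⁻ r, f r ∂(Measure.volumeIoiPow (Module.finrank ℝ E - 1)) := by
        rw [lintegral_prod _ hf'.aemeasurable]
        simp [lintegral_const, mul_comm]
    _ = _ := by
        rw [Measure.volumeIoiPow, lintegral_withDensity_eq_lintegral_mul _ (by fun_prop)
          (g := fun r : Ioi (0 : ℝ) => f r)
          (hf.comp measurable_subtype_coe),
          ← lintegral_subtype_comap measurableSet_Ioi (fun r => ENNReal.ofReal (r ^ _) * f r)]
        rfl

theorem lintegral_ofReal_inv_one_add_sq_sub (a : ℝ) :
    ∫⁻ r : ℝ, ENNReal.ofReal (1 + (a - r) ^ 2)⁻¹ = ENNReal.ofReal π := by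
  have hint : Integrable fun r : ℝ => (1 + (a - r) ^ 2)⁻¹ := by
    simpa using integrable_inv_one_add_sq.comp_sub_left a
  rw [← ofReal_integral_eq_lintegral_ofReal hint (ae_of_all _ fun r => by positivity),
    integral_sub_left_eq_self (fun s : ℝ => (1 + s ^ 2)⁻¹) volume a, integral_univ_inv_one_add_sq]

lemma jbR_sq (s : ℝ) : jbR s ^ 2 = 1 + s ^ 2 := Real.sq_sqrt (by positivity)

lemma jbR_pos (s : ℝ) : 0 < jbR s := Real.sqrt_pos.2 (by positivity)

lemma jbR_sub_comm (s t : ℝ) : jbR (s - t) = jbR (t - s) := by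
  unfold jbR
  ring_nf

lemma jbR_le_two_mul_jbR {s t : ℝ} (h : |t| ≤ 2 * |s|) : jbR t ≤ 2 * jbR s := by
  rw [← abs_of_pos (jbR_pos t), ← abs_of_pos (by linarith [jbR_pos s] : 0 < 2 * jbR s)]
  refine sq_le_sq.1 ?_
  rw [mul_pow, jbR_sq, jbR_sq]
  nlinarith [sq_abs t, sq_abs s, abs_nonneg t]

def diagonalShellBound (C s t : ℝ) : ℝ :=
  if 1 / 2 * s ≤ t ∧ t ≤ 2 * s then C * (jbR s)⁻¹ * (jbR t)⁻¹ * (jbR (s - t) ^ 2)⁻¹ else 0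

lemma diagonalShellBound_comm (C s t : ℝ) : diagonalShellBound C s t = diagonalShellBound C t s := by
  unfold diagonalShellBound
  rw [jbR_sub_comm]
  by_cases h : 1 / 2 * s ≤ t ∧ t ≤ 2 * s
  · rw [if_pos h, if_pos ⟨by linarith, by linarith⟩]; ring
  · rw [if_neg h, if_neg fun h' => h ⟨by linarith, by linarith⟩]

lemma measurable_diagonalShellBound (C s : ℝ) : Measurable (diagonalShellBound C s) := by
  unfold diagonalShellBound jbR
  refine Measurable.ite ((measurableSet_le measurable_const measurable_id).inter
    (measurableSet_le measurable_id measurable_const)) (by fun_prop) measurable_const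

lemma sq_mul_diagonalShellBound_le {C : ℝ} (hC : 0 ≤ C) (s : ℝ) {t : ℝ} (ht : 0 ≤ t) :
    t ^ 2 * diagonalShellBound C s t ≤ 2 * C * (1 + (s - t) ^ 2)⁻¹ := by
  unfold diagonalShellBound
  split_ifs with h
  · have hjt : t ^ 2 ≤ 2 * (jbR s * jbR t) := by
      have hjb : jbR t ≤ 2 * jbR s := jbR_le_two_mul_jbR (by
        rw [abs_of_nonneg ht, abs_of_nonneg (by linarith)]; exact h.2)
      nlinarith [jbR_sq t, jbR_pos t]
    rw [jbR_sq]
    have hs := jbR_pos s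
    have ht' := jbR_pos t
    calc t ^ 2 * (C * (jbR s)⁻¹ * (jbR t)⁻¹ * (1 + (s - t) ^ 2)⁻¹)
        = C * (1 + (s - t) ^ 2)⁻¹ * (t ^ 2 / (jbR s * jbR t)) := by field_simp
      _ ≤ C * (1 + (s - t) ^ 2)⁻¹ * 2 := by
        gcongr; rw [div_le_iff₀ (by positivity)]; linarith
      _ = 2 * C * (1 + (s - t) ^ 2)⁻¹ := by ring
  · rw [mul_zero]; positivity

theorem lintegral_enorm_le_of_norm_le_diagonalShellBound {F : Type*} [NormedAddCommGroup F]
    {g : E3 → F} {C s : ℝ} (hC : 0 ≤ C)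
    (hg : ∀ y, ‖g y‖ ≤ diagonalShellBound C s ‖y‖) :
    ∫⁻ y, ‖g y‖ₑ ≤ (volume : Measure E3).toSphere univ * ENNReal.ofReal (2 * C * π) := by
  have hpolar := lintegral_fun_norm_addHaar (volume : Measure E3)
    (measurable_diagonalShellBound C s).ennreal_ofReal
  rw [finrank_euclideanSpace_fin] at hpolar
  calc ∫⁻ y, ‖g y‖ₑ ≤ ∫⁻ y : E3, ENNReal.ofReal (diagonalShellBound C s ‖y‖) :=
        lintegral_mono fun y => by rw [← ofReal_norm]; exact ENNReal.ofReal_le_ofReal (hg y)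
    _ = (volume : Measure E3).toSphere univ *
          ∫⁻ t in Ioi 0, ENNReal.ofReal (t ^ 2) * ENNReal.ofReal (diagonalShellBound C s t) :=
        hpolar
    _ ≤ (volume : Measure E3).toSphere univ *
          ∫⁻ t, ENNReal.ofReal (2 * C) * ENNReal.ofReal (1 + (s - t) ^ 2)⁻¹ := by
        gcongr (volume : Measure E3).toSphere univ * ?_
        refine (setLIntegral_mono (by fun_prop) fun t (ht : 0 < t) => ?_).trans
          (setLIntegral_le_lintegral (Ioi 0) fun t =>
            ENNReal.ofReal (2 * C) * ENNReal.ofReal (1 + (s - t) ^ 2)⁻¹)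
        rw [← ENNReal.ofReal_mul (by positivity), ← ENNReal.ofReal_mul (by positivity)]
        exact ENNReal.ofReal_le_ofReal (sq_mul_diagonalShellBound_le hC s ht.le)
    _ = (volume : Measure E3).toSphere univ * ENNReal.ofReal (2 * C * π) := by
        rw [lintegral_const_mul _ (by fun_prop), lintegral_ofReal_inv_one_add_sq_sub,
          ← ENNReal.ofReal_mul (by positivity)]

/-- If `|K(x,y)| ≲ ⟨x⟩⁻¹⟨y⟩⁻¹⟨|x|-|y|⟩⁻²` and `K₁` is the restriction of `K` to the region
`½|x| ≤ |y| ≤ 2|x|`, then `K₁` is admissible; in particular `T_{K₁}` is bounded on `L^p(ℝ³)`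
for all `1 ≤ p ≤ ∞`. -/
theorem kernel_diagonal_piece_admissible (K : E3 → E3 → ℂ)
    (hmeas : Measurable (Function.uncurry K))
    (hK : ∃ C : ℝ, ∀ x y : E3, ‖K x y‖ ≤ C * (jb x)⁻¹ * (jb y)⁻¹ * ((jbR (‖x‖ - ‖y‖)) ^ 2)⁻¹)
    (K₁ : E3 → E3 → ℂ)
    (hK₁ : ∀ x y : E3, K₁ x y = if (1 / 2) * ‖x‖ ≤ ‖y‖ ∧ ‖y‖ ≤ 2 * ‖x‖ then K x y else 0) :
    (∃ M : ℝ, (∀ x : E3, (∫ y : E3, ‖K₁ x y‖) ≤ M) ∧ (∀ y : E3, (∫ x : E3, ‖K₁ x y‖) ≤ M)) ∧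
    (∀ p : ℝ≥0∞, 1 ≤ p → ∃ C : ℝ≥0, ∀ f : E3 → ℂ, MemLp f p volume →
      eLpNorm (fun x : E3 => ∫ y : E3, K₁ x y * f y) p volume ≤ C * eLpNorm f p volume) := by
  obtain ⟨C, hC⟩ := hK
  have hC0 : 0 ≤ C := by simpa [jb, jbR] using (norm_nonneg _).trans (hC 0 0)
  have hK₁_le (x y : E3) : ‖K₁ x y‖ ≤ diagonalShellBound C ‖x‖ ‖y‖ := by
    rw [hK₁, diagonalShellBound]
    split_ifs
    exacts [hC x y, by simp]
  have hK₁m : Measurable (Function.uncurry K₁) := by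
    have hregion : MeasurableSet {z : E3 × E3 | 1 / 2 * ‖z.1‖ ≤ ‖z.2‖ ∧ ‖z.2‖ ≤ 2 * ‖z.1‖} := by
      rw [ofPred_and]
      exact (measurableSet_le (by fun_prop) (by fun_prop)).inter
        (measurableSet_le (by fun_prop) (by fun_prop))
    rw [show Function.uncurry K₁ = fun z => if 1 / 2 * ‖z.1‖ ≤ ‖z.2‖ ∧ ‖z.2‖ ≤ 2 * ‖z.1‖
      then Function.uncurry K z else 0 from funext fun z => hK₁ z.1 z.2]
    exact hmeas.ite hregion measurable_const
  set M := (volume : Measure E3).toSphere univ * ENNReal.ofReal (2 * C * π)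
  have hM : M ≠ ∞ := ENNReal.mul_ne_top (measure_ne_top _ _) ENNReal.ofReal_ne_top
  have hrow (x : E3) : ∫⁻ y, ‖K₁ x y‖ₑ ≤ M :=
    lintegral_enorm_le_of_norm_le_diagonalShellBound hC0 (hK₁_le x)
  have hcol (y : E3) : ∫⁻ x, ‖K₁ x y‖ₑ ≤ M :=
    lintegral_enorm_le_of_norm_le_diagonalShellBound hC0 fun x =>
      (hK₁_le x y).trans_eq (diagonalShellBound_comm C _ _)
  refine ⟨⟨M.toReal, fun x => ?_, fun y => ?_⟩, fun p hp => ⟨M.toNNReal, fun f hf => ?_⟩⟩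
  · rw [integral_norm_eq_lintegral_enorm hK₁m.of_uncurry_left.aestronglyMeasurable]
    exact ENNReal.toReal_mono hM (hrow x)
  · rw [integral_norm_eq_lintegral_enorm hK₁m.of_uncurry_right.aestronglyMeasurable]
    exact ENNReal.toReal_mono hM (hcol y)
  · rw [ENNReal.coe_toNNReal hM]
    exact eLpNorm_integral_kernel_le hK₁m hrow hcol hf.1 hp
end
end

section
/- Let $\mathcal{K}(s,r)=\frac{\chi_{\{|s-r|\ge 1\}}}{4s^2(s-r)}$ for $s,r\in\mathbb{R}$, $s\neq 0$. There is a constant $A$ such that for every $\delta>0$ and every $r,\bar r\in\mathbb{R}$ with $|r-\bar r|<\delta$, $\int_{\{s: |s-r|\ge 2\delta\}} |\mathcal{K}(s,r)-\mathcal{K}(s,\bar r)|\, s^2\,ds \le A$. -/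
open MeasureTheory Real
open scoped ENNReal NNReal

noncomputable section

/-!
Writing `𝒦 s r = truncInv (s - r) / (4 s²)` with `truncInv a = χ_{|a| ≥ 1} / a`, the weight `s²`
cancels and, with `a = s - r`, `b = s - rb`, one has to integrate `|truncInv a - truncInv b|` over
`|a| ≥ 2δ`, where `|a - b| < δ`. If both cutoffs are active, `|a⁻¹ - b⁻¹| ≤ 2δ / a²`, which on
`|a| ≥ 2δ` is dominated by a Cauchy density of scale `δ`; if only one is, then `|a| < 2` and the
difference is at most `1`. Both majorants have integrals independent of `δ`.
-/

open ProbabilityTheory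

def truncInv (a : ℝ) : ℝ := (if 1 ≤ |a| then 1 else 0) / a

lemma truncInv_of_one_le {a : ℝ} (ha : 1 ≤ |a|) : truncInv a = a⁻¹ := by
  simp [truncInv, ha]

lemma truncInv_of_lt_one {a : ℝ} (ha : |a| < 1) : truncInv a = 0 := by
  simp [truncInv, not_le.mpr ha]

lemma abs_truncInv_le_one (a : ℝ) : |truncInv a| ≤ 1 := by
  rcases le_or_gt 1 |a| with ha | ha
  · rw [truncInv_of_one_le ha, abs_inv]
    exact inv_le_one_of_one_le₀ ha
  · simp [truncInv_of_lt_one ha]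

lemma abs_inv_sub_inv_le {a b δ : ℝ} (hab : |a - b| < δ) (ha : 2 * δ ≤ |a|) :
    |a⁻¹ - b⁻¹| ≤ 3 * δ / (a ^ 2 + δ ^ 2) := by
  have hδ : 0 < δ := (abs_nonneg _).trans_lt hab
  have ha0 : 0 < |a| := by linarith
  have hb : |a| / 2 ≤ |b| := by linarith [abs_sub_abs_le_abs_sub a b]
  have hb0 : 0 < |b| := by linarith
  rw [inv_sub_inv (abs_pos.mp ha0) (abs_pos.mp hb0), abs_div, abs_mul, abs_sub_comm,
    div_le_div_iff₀ (by positivity) (by positivity), ← sq_abs a]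
  have hδa : δ ^ 2 ≤ |a| ^ 2 / 4 := by nlinarith
  calc |a - b| * (|a| ^ 2 + δ ^ 2) ≤ δ * (5 / 4 * |a| ^ 2) := by gcongr; linarith
    _ ≤ 3 * δ * (|a| * (|a| / 2)) := by nlinarith
    _ ≤ 3 * δ * (|a| * |b|) := by gcongr

lemma abs_truncInv_sub_le {a b δ : ℝ} (hab : |a - b| < δ) (ha : 2 * δ ≤ |a|) :
    |truncInv a - truncInv b| ≤ 3 * δ / (a ^ 2 + δ ^ 2) + 5 / (a ^ 2 + 1) := by
  have hδ : 0 < δ := (abs_nonneg _).trans_lt hab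
  have hnear : |a| ≤ |b| + δ := by linarith [abs_sub_abs_le_abs_sub a b]
  have hfar : 0 ≤ 3 * δ / (a ^ 2 + δ ^ 2) := by positivity
  have hsmall : |a| < 2 → 1 ≤ 5 / (a ^ 2 + 1) := fun h2 => by
    rw [le_div_iff₀ (by positivity), ← sq_abs]; nlinarith [abs_nonneg a]
  rcases le_or_gt 1 |a| with ha1 | ha1 <;> rcases le_or_gt 1 |b| with hb1 | hb1
  · rw [truncInv_of_one_le ha1, truncInv_of_one_le hb1]
    linarith [abs_inv_sub_inv_le hab ha, (by positivity : (0 : ℝ) ≤ 5 / (a ^ 2 + 1))]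
  · rw [truncInv_of_lt_one hb1, sub_zero]
    linarith [abs_truncInv_le_one a, hsmall (by linarith)]
  · rw [truncInv_of_lt_one ha1, zero_sub, abs_neg]
    linarith [abs_truncInv_le_one b, hsmall (by linarith)]
  · rw [truncInv_of_lt_one ha1, truncInv_of_lt_one hb1, sub_zero, abs_zero]
    positivity

lemma lintegral_ofReal_div_sq_add_sq {γ : ℝ} (hγ : 0 < γ) :
    ∫⁻ a, ENNReal.ofReal (γ / (a ^ 2 + γ ^ 2)) = ENNReal.ofReal π := by
  lift γ to ℝ≥0 using hγ.le
  have hpdf : ∀ a, ENNReal.ofReal (γ / (a ^ 2 + γ ^ 2)) = ENNReal.ofReal π * cauchyPDF 0 γ a := by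
    intro a
    rw [cauchyPDF_def, ← ENNReal.ofReal_mul pi_pos.le, cauchyPDFReal_def, sub_zero]
    field_simp
  simp_rw [hpdf]
  rw [lintegral_const_mul _ (measurable_cauchyPDF 0 γ),
    lintegral_cauchyPDF_eq_one 0 (by exact_mod_cast hγ.ne'), mul_one]

lemma lintegral_truncInv_majorant {δ : ℝ} (hδ : 0 < δ) :
    ∫⁻ a, ENNReal.ofReal (3 * δ / (a ^ 2 + δ ^ 2) + 5 / (a ^ 2 + 1)) = ENNReal.ofReal (8 * π) := by
  have hsplit : ∀ a : ℝ, ENNReal.ofReal (3 * δ / (a ^ 2 + δ ^ 2) + 5 / (a ^ 2 + 1)) =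
      ENNReal.ofReal 3 * ENNReal.ofReal (δ / (a ^ 2 + δ ^ 2)) +
        ENNReal.ofReal 5 * ENNReal.ofReal (1 / (a ^ 2 + 1 ^ 2)) := by
    intro a
    rw [← ENNReal.ofReal_mul (by norm_num), ← ENNReal.ofReal_mul (by norm_num),
      ← ENNReal.ofReal_add (by positivity) (by positivity)]
    congr 1; ring
  simp_rw [hsplit]
  rw [lintegral_add_left (by fun_prop), lintegral_const_mul _ (by fun_prop),
    lintegral_const_mul _ (by fun_prop), lintegral_ofReal_div_sq_add_sq hδ,
    lintegral_ofReal_div_sq_add_sq one_pos, ← ENNReal.ofReal_mul (by norm_num),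
    ← ENNReal.ofReal_mul (by norm_num), ← ENNReal.ofReal_add (by positivity) (by positivity)]
  ring_nf

lemma abs_div_sub_div_mul_sq_le (x y s : ℝ) :
    |x / (4 * s ^ 2) - y / (4 * s ^ 2)| * s ^ 2 ≤ |x - y| := by
  rcases eq_or_ne s 0 with rfl | hs
  · simp
  rw [← sub_div, abs_div, abs_of_pos (by positivity : 0 < 4 * s ^ 2), div_mul_eq_mul_div,
    div_le_iff₀ (by positivity)]
  nlinarith [abs_nonneg (x - y), sq_nonneg s]

/-- Hörmander-type regularity condition for the one-dimensional kernel
`𝒦(s,r) = χ_{|s-r|≥1}/(4s²(s-r))` with respect to the doubling measure `s² ds`. -/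
theorem oneD_kernel_hormander_condition
    (𝒦 : ℝ → ℝ → ℝ)
    (h𝒦 : ∀ s r : ℝ, 𝒦 s r = (if (1 : ℝ) ≤ |s - r| then 1 else 0) / (4 * s ^ 2 * (s - r))) :
    ∃ A : ℝ, ∀ δ : ℝ, 0 < δ → ∀ r rb : ℝ, |r - rb| < δ →
      (∫⁻ s in {s : ℝ | 2 * δ ≤ |s - r|},
          ENNReal.ofReal (|𝒦 s r - 𝒦 s rb| * s ^ 2)) ≤ ENNReal.ofReal A := by
  have h𝒦_truncInv : ∀ s r, 𝒦 s r = truncInv (s - r) / (4 * s ^ 2) := fun s r => by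
    rw [h𝒦, truncInv, div_div, mul_comm]
  set g : ℝ → ℝ → ℝ := fun δ a => 3 * δ / (a ^ 2 + δ ^ 2) + 5 / (a ^ 2 + 1)
  refine ⟨8 * π, fun δ hδ r rb hrb => ?_⟩
  have hpt : ∀ s ∈ {s : ℝ | 2 * δ ≤ |s - r|},
      ENNReal.ofReal (|𝒦 s r - 𝒦 s rb| * s ^ 2) ≤ ENNReal.ofReal (g δ (s - r)) := by
    intro s hs
    have hclose : |(s - r) - (s - rb)| < δ := by rwa [sub_sub_sub_cancel_left, abs_sub_comm]
    rw [h𝒦_truncInv, h𝒦_truncInv]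
    exact ENNReal.ofReal_le_ofReal
      ((abs_div_sub_div_mul_sq_le _ _ s).trans (abs_truncInv_sub_le hclose hs))
  calc (∫⁻ s in {s : ℝ | 2 * δ ≤ |s - r|}, ENNReal.ofReal (|𝒦 s r - 𝒦 s rb| * s ^ 2))
      ≤ ∫⁻ s in {s : ℝ | 2 * δ ≤ |s - r|}, ENNReal.ofReal (g δ (s - r)) :=
        setLIntegral_mono' (measurableSet_le (by fun_prop) (by fun_prop)) hpt
    _ ≤ ∫⁻ s, ENNReal.ofReal (g δ (s - r)) := setLIntegral_le_lintegral _ _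
    _ = ∫⁻ a, ENNReal.ofReal (g δ a) :=
        lintegral_sub_right_eq_self (fun a => ENNReal.ofReal (g δ a)) r
    _ = ENNReal.ofReal (8 * π) := lintegral_truncInv_majorant hδ
end
end

section
/- Let $R_0\ge 1$, $R\ge 1$, $u_1,u_2\in\mathbb{R}^3$ with $|u_1|,|u_2|\le R_0$, and $x\in\mathbb{R}^3$ with $R+2R_0+1\le |x|\le R+2R_0+2$. Then $\Phi(u_1,u_2,x):=\int_{|y|\le R}\frac{|x-u_1|}{|x-u_1|^4-|y-u_2|^4}\,dy \ \ge\ \pi\ln\Big(1+\frac{2(R-R_0)}{4R_0+2}\Big)-2\pi^2$; in particular $\Phi(u_1,u_2,x)\to\infty$ as $R\to\infty$, uniformly in $u_1,u_2$. Moreover, for such $x,y,u_1,u_2$ one has $|x-u_1|-|y-u_2|\ge 1$, so the indicator $\chi_{\{||x-u_1|-|y-u_2||\ge1\}}$ equals $1$ in the integrand. -/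
/-!
Write `M = |x - u₁| ≥ R + R₀ + 1`. Every `y` with `|y| ≤ R` has `|y - u₂| ≤ M - 1`, so the
integrand is positive and continuous, and it suffices to integrate over the ball of radius
`ρ = R - R₀` about `u₂`, which lies in `{|y| ≤ R}`. In polar coordinates about `u₂` that integral
is `4π ∫₀^ρ M r² / (M⁴ - r⁴) dr = π log ((M + ρ)/(M - ρ)) - 2π arctan (ρ / M)`, and
`M - ρ ≤ 4R₀ + 2` turns the logarithm into the stated one while `arctan < π/2`.
When `R < R₀` the right-hand side is already `≤ 0`.
-/

open MeasureTheory Real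
open scoped ENNReal NNReal

noncomputable section

open Metric Set

theorem setIntegral_closedBall_fun_norm_sub {E : Type*} [NormedAddCommGroup E]
    [NormedSpace ℝ E] [Nontrivial E] [FiniteDimensional ℝ E] [MeasurableSpace E] [BorelSpace E]
    (μ : Measure E) [μ.IsAddHaarMeasure] (f : ℝ → ℝ) (u : E) {ρ : ℝ} (hρ : 0 ≤ ρ) :
    ∫ y in closedBall u ρ, f ‖y - u‖ ∂μ =
      Module.finrank ℝ E * μ.real (ball 0 1) *
        ∫ r in 0..ρ, r ^ (Module.finrank ℝ E - 1) * f r := by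
  have hind : (closedBall u ρ).indicator (fun y => f ‖y - u‖) =
      fun y => (Iic ρ).indicator f ‖y - u‖ := by
    ext y
    simp only [indicator, mem_closedBall, dist_eq_norm, mem_Iic]
  rw [← integral_indicator measurableSet_closedBall, hind,
    integral_sub_right_eq_self (fun z => (Iic ρ).indicator f ‖z‖) u,
    integral_fun_norm_addHaar, nsmul_eq_mul, smul_eq_mul, mul_assoc]
  congr 2
  have hsmul : ∀ y : ℝ, y ^ (Module.finrank ℝ E - 1) • (Iic ρ).indicator f y =
      (Iic ρ).indicator (fun r => r ^ (Module.finrank ℝ E - 1) * f r) y := fun y => by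
    rw [indicator_mul_right]; rfl
  simp only [hsmul]
  rw [integral_indicator measurableSet_Iic, Measure.restrict_restrict measurableSet_Iic,
    inter_comm, Ioi_inter_Iic, intervalIntegral.integral_of_le hρ]

theorem EuclideanSpace.volume_real_ball_fin_three :
    volume.real (ball (0 : EuclideanSpace ℝ (Fin 3)) 1) = 4 / 3 * π := by
  rw [measureReal_def, EuclideanSpace.volume_ball_fin_three, ENNReal.ofReal_one, one_pow, one_mul, ENNReal.toReal_ofReal (by positivity)]
  ring

theorem pow_four_sub_pow_four_pos {M r : ℝ} (hr : 0 ≤ r) (hrM : r < M) : 0 < M ^ 4 - r ^ 4 :=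
  sub_pos.2 (pow_lt_pow_left₀ hrM hr four_ne_zero)

-- Partial fractions: `r² M / (M⁴ - r⁴) = (1/(M - r) + 1/(M + r)) / 4 - (M / (M² + r²)) / 2`.
theorem hasDerivAt_log_sub_log_sub_arctan {M r : ℝ} (hM : 0 < M) (hr : 0 ≤ r) (hrM : r < M) :
    HasDerivAt (fun t => (log (M + t) - log (M - t)) / 4 - arctan (t / M) / 2)
      (r ^ 2 * (M / (M ^ 4 - r ^ 4))) r := by
  have hplus : 0 < M + r := by linarith
  have hminus : 0 < M - r := by linarith
  have hlog := (((hasDerivAt_id r).const_add M).log hplus.ne').sub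
    (((hasDerivAt_id r).const_sub M).log hminus.ne')
  have hatan := (hasDerivAt_arctan (r / M)).comp r ((hasDerivAt_id r).div_const M)
  have hden := (pow_four_sub_pow_four_pos hr hrM).ne'
  refine ((hlog.div_const 4).sub (hatan.div_const 2)).congr_deriv ?_
  simp only [id]
  field_simp
  ring

theorem integral_sq_mul_div_pow_four_sub {M ρ : ℝ} (hM : 0 < M) (hρ : 0 ≤ ρ) (hρM : ρ < M) :
    ∫ r in 0..ρ, r ^ 2 * (M / (M ^ 4 - r ^ 4)) =
      (log (M + ρ) - log (M - ρ)) / 4 - arctan (ρ / M) / 2 := by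
  have hIcc : uIcc 0 ρ = Icc 0 ρ := uIcc_of_le hρ
  have hderiv : ∀ r ∈ uIcc 0 ρ, HasDerivAt
      (fun t => (log (M + t) - log (M - t)) / 4 - arctan (t / M) / 2)
      (r ^ 2 * (M / (M ^ 4 - r ^ 4))) r := by
    rw [hIcc]
    exact fun r hr => hasDerivAt_log_sub_log_sub_arctan hM hr.1 (hr.2.trans_lt hρM)
  have hcont : ContinuousOn (fun r : ℝ => r ^ 2 * (M / (M ^ 4 - r ^ 4))) (uIcc 0 ρ) := by
    refine (continuousOn_pow 2).mul (continuousOn_const.div (by fun_prop) fun r hr => ?_)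
    rw [hIcc] at hr
    exact (pow_four_sub_pow_four_pos hr.1 (hr.2.trans_lt hρM)).ne'
  rw [intervalIntegral.integral_eq_sub_of_hasDerivAt hderiv hcont.intervalIntegrable]
  simp

theorem setIntegral_closedBall_div_pow_four_sub {M ρ : ℝ} (u : E3) (hM : 0 < M) (hρ : 0 ≤ ρ)
    (hρM : ρ < M) :
    ∫ y in closedBall u ρ, M / (M ^ 4 - ‖y - u‖ ^ 4) =
      π * log ((M + ρ) / (M - ρ)) - 2 * π * arctan (ρ / M) := by
  rw [setIntegral_closedBall_fun_norm_sub volume (fun r => M / (M ^ 4 - r ^ 4)) u hρ,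
    EuclideanSpace.volume_real_ball_fin_three, finrank_euclideanSpace_fin,
    integral_sq_mul_div_pow_four_sub hM hρ hρM, log_div (by linarith) (by linarith)]
  push_cast
  ring

theorem integrableOn_div_pow_four_sub {E : Type*} [NormedAddCommGroup E] [MeasurableSpace E]
    [OpensMeasurableSpace E] (μ : Measure E) [IsFiniteMeasureOnCompacts μ] {s : Set E}
    (hs : IsCompact s) (u : E) {M : ℝ} (hsM : ∀ y ∈ s, ‖y - u‖ < M) :
    IntegrableOn (fun y => M / (M ^ 4 - ‖y - u‖ ^ 4)) s μ :=
  ContinuousOn.integrableOn_compact hs <| continuousOn_const.div (by fun_prop) fun y hy =>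
    (pow_four_sub_pow_four_pos (norm_nonneg _) (hsM y hy)).ne'

theorem log_one_add_div_nonpos {a t : ℝ} (ha : 0 < a) (hta : -a ≤ t) (ht : t ≤ 0) :
    log (1 + t / a) ≤ 0 := by
  have harg : 1 + t / a = (a + t) / a := by field_simp
  rw [harg]
  exact log_nonpos (div_nonneg (by linarith) ha.le) ((div_le_one ha).2 (by linarith))

theorem log_one_add_le_log_div {a M ρ : ℝ} (ha : 0 < a) (hρ : 0 ≤ ρ) (hρM : ρ < M)
    (hMa : M - ρ ≤ a) : log (1 + 2 * ρ / a) ≤ log ((M + ρ) / (M - ρ)) := by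
  have hMρ : 0 < M - ρ := by linarith
  refine log_le_log (by positivity) ?_
  calc 1 + 2 * ρ / a ≤ 1 + 2 * ρ / (M - ρ) := by gcongr
    _ = (M + ρ) / (M - ρ) := by field_simp; ring

theorem Phi_lower_bound_general (R₀ R : ℝ) (hR : 1 ≤ R)
    (u₁ u₂ x : E3) (hu₁ : ‖u₁‖ ≤ R₀) (hu₂ : ‖u₂‖ ≤ R₀)
    (hx₁ : R + 2 * R₀ + 1 ≤ ‖x‖) (hx₂ : ‖x‖ ≤ R + 2 * R₀ + 2) :
    (∀ y : E3, ‖y‖ ≤ R → 1 ≤ ‖x - u₁‖ - ‖y - u₂‖) ∧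
    π * Real.log (1 + 2 * (R - R₀) / (4 * R₀ + 2)) - 2 * π ^ 2 ≤
      ∫ y in {y : E3 | ‖y‖ ≤ R}, ‖x - u₁‖ / (‖x - u₁‖ ^ 4 - ‖y - u₂‖ ^ 4) := by
  set M := ‖x - u₁‖
  have hR₀ : 0 ≤ R₀ := (norm_nonneg u₁).trans hu₁
  have hM_ge : R + R₀ + 1 ≤ M := by linarith [norm_sub_norm_le x u₁]
  have hM_le : M ≤ R + 3 * R₀ + 2 := by linarith [norm_sub_le x u₁]
  have hgap : ∀ y : E3, ‖y‖ ≤ R → ‖y - u₂‖ ≤ M - 1 := fun y hy => by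
    linarith [norm_sub_le y u₂]
  refine ⟨fun y hy => by linarith [hgap y hy], ?_⟩
  have hS : {y : E3 | ‖y‖ ≤ R} = closedBall 0 R := by ext; simp
  have hnonneg : ∀ y ∈ closedBall (0 : E3) R, 0 ≤ M / (M ^ 4 - ‖y - u₂‖ ^ 4) := fun y hy => by
    have hy' : ‖y - u₂‖ < M := by linarith [hgap y (mem_closedBall_zero_iff.1 hy)]
    exact div_nonneg (by linarith) (pow_four_sub_pow_four_pos (norm_nonneg _) hy').le
  rw [hS]
  rcases lt_or_ge R R₀ with hRR₀ | hR₀R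
  · have hlog := log_one_add_div_nonpos (a := 4 * R₀ + 2) (t := 2 * (R - R₀)) (by linarith)
      (by linarith) (by linarith)
    calc _ ≤ (0 : ℝ) := by nlinarith [pi_pos]
      _ ≤ _ := setIntegral_nonneg measurableSet_closedBall hnonneg
  · have hball : closedBall u₂ (R - R₀) ⊆ closedBall 0 R :=
      closedBall_subset_closedBall' (by rw [dist_zero_right]; linarith)
    calc _ ≤ π * log ((M + (R - R₀)) / (M - (R - R₀))) - 2 * π * arctan ((R - R₀) / M) := by
          have hlog := log_one_add_le_log_div (a := 4 * R₀ + 2) (by linarith) (sub_nonneg.2 hR₀R)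
            (by linarith : R - R₀ < M) (by linarith)
          nlinarith [arctan_lt_pi_div_two ((R - R₀) / M), pi_pos]
      _ = ∫ y in closedBall u₂ (R - R₀), M / (M ^ 4 - ‖y - u₂‖ ^ 4) :=
          (setIntegral_closedBall_div_pow_four_sub u₂ (by linarith) (by linarith) (by linarith)).symm
      _ ≤ _ := setIntegral_mono_set
          (integrableOn_div_pow_four_sub volume (isCompact_closedBall 0 R) u₂ fun y hy => by
            linarith [hgap y (mem_closedBall_zero_iff.1 hy)])
          ((ae_restrict_iff' measurableSet_closedBall).2 (.of_forall hnonneg))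
          hball.eventuallyLE

/-- Key lower bound for the unboundedness on `L^∞`: for `|x|` in the shell
`R+2R₀+1 ≤ |x| ≤ R+2R₀+2` and `|u₁|,|u₂| ≤ R₀`, the truncation is inactive and
`Φ(u₁,u₂,x) = ∫_{|y|≤R} |x-u₁|/(|x-u₁|⁴-|y-u₂|⁴) dy ≥ π ln(1 + 2(R-R₀)/(4R₀+2)) - 2π²`. -/
theorem Phi_lower_bound (R₀ R : ℝ) (hR₀ : 1 ≤ R₀) (hR : 1 ≤ R)
    (u₁ u₂ x : E3) (hu₁ : ‖u₁‖ ≤ R₀) (hu₂ : ‖u₂‖ ≤ R₀)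
    (hx₁ : R + 2 * R₀ + 1 ≤ ‖x‖) (hx₂ : ‖x‖ ≤ R + 2 * R₀ + 2) :
    (∀ y : E3, ‖y‖ ≤ R → 1 ≤ ‖x - u₁‖ - ‖y - u₂‖) ∧
    π * Real.log (1 + 2 * (R - R₀) / (4 * R₀ + 2)) - 2 * π ^ 2 ≤
      ∫ y in {y : E3 | ‖y‖ ≤ R}, ‖x - u₁‖ / (‖x - u₁‖ ^ 4 - ‖y - u₂‖ ^ 4) :=
  Phi_lower_bound_general R₀ R hR u₁ u₂ x hu₁ hu₂ hx₁ hx₂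
end
end

section
/- Let $R_0\ge 1$ and let $V:\mathbb{R}^3\to\mathbb{R}$ be integrable, not identically zero, with support in the ball $B(0,R_0)$. Define $\mathbb{G}(x,y)=\frac{-1-i}{4\pi\|V\|_{L^1}^2}\int_{\mathbb{R}^6}|V(u_1)V(u_2)|\,\frac{|x-u_1|\,\chi_{\{||x-u_1|-|y-u_2||\ge1\}}}{|x-u_1|^4-|y-u_2|^4}\,du_1du_2$ and $f_1=\chi_{B(0,1)}$. Then $\int_{3R_0+2\le |x|\le R}|T_{\mathbb{G}}f_1(x)|\,dx \gtrsim \ln\big(\frac{R}{3R_0+2}\big)$ for all large $R$; in particular $T_{\mathbb{G}}f_1\notin L^1(\mathbb{R}^3)$ and $T_{\mathbb{G}}$ is not bounded on $L^1(\mathbb{R}^3)$. -/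
open MeasureTheory Real
open scoped ENNReal NNReal

noncomputable section

/-! For `‖x‖ ≥ 3R₀ + 2`, `‖y‖ ≤ 1` and `‖u₁‖, ‖u₂‖ ≤ R₀` we have `‖x - u₁‖ ≥ 2‖y - u₂‖` and
`‖x - u₁‖ - ‖y - u₂‖ ≥ 1`, so the cutoff equals `1` and the kernel lies between `(8‖x‖³)⁻¹` and `2`.
Integrating against `|V(u₁)V(u₂)|` and over the unit ball gives `‖T_𝔾 f₁ x‖ ≍ ‖x‖⁻³` there, and in
polar coordinates `∫_{A ≤ ‖x‖ ≤ R} ‖x‖⁻³ dx = 3 |B(0,1)| log (R / A)`, which is unbounded in `R`. -/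

open Metric Set Filter

theorem not_integrable_of_tendsto_setIntegral_norm {α ι F : Type*} [MeasurableSpace α]
    {μ : Measure α} [NormedAddCommGroup F] {l : Filter ι} [l.NeBot] {f : α → F} {s : ι → Set α}
    (h : Tendsto (fun i ↦ ∫ x in s i, ‖f x‖ ∂μ) l atTop) : ¬ Integrable f μ := fun hf ↦
  let ⟨_, hi⟩ := (h.eventually (eventually_gt_atTop (∫ x, ‖f x‖ ∂μ))).exists
  hi.not_ge (setIntegral_le_integral hf.norm (ae_of_all _ fun _ ↦ norm_nonneg _))

section Shell

variable {E : Type*} [NormedAddCommGroup E] [NormedSpace ℝ E] [Nontrivial E]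
  [FiniteDimensional ℝ E] [MeasurableSpace E] [BorelSpace E] (μ : Measure E) [μ.IsAddHaarMeasure]

theorem setIntegral_shell_inv_norm_pow_finrank {A R : ℝ} (hA : 0 < A) (hAR : A ≤ R) :
    ∫ x in {x : E | A ≤ ‖x‖ ∧ ‖x‖ ≤ R}, (‖x‖ ^ Module.finrank ℝ E)⁻¹ ∂μ =
      Module.finrank ℝ E * μ.real (ball 0 1) * Real.log (R / A) := by
  set n := Module.finrank ℝ E
  have hn : 0 < n := Module.finrank_pos (R := ℝ) (M := E)
  have hind : ∀ x : E, {x : E | A ≤ ‖x‖ ∧ ‖x‖ ≤ R}.indicator (fun x ↦ (‖x‖ ^ n)⁻¹) x =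
      (Icc A R).indicator (fun r ↦ (r ^ n)⁻¹) ‖x‖ := fun _ ↦ rfl
  have hradial : ∫ r in Ioi (0 : ℝ), r ^ (n - 1) • (Icc A R).indicator (fun r ↦ (r ^ n)⁻¹) r =
      ∫ r in Icc A R, r⁻¹ := calc
    _ = ∫ r in Ioi (0 : ℝ), (Icc A R).indicator (fun r ↦ r⁻¹) r := by
      refine setIntegral_congr_fun measurableSet_Ioi fun r hr ↦ ?_
      by_cases h : r ∈ Icc A R
      · have : r ≠ 0 := (mem_Ioi.1 hr).ne'
        rw [indicator_of_mem h, indicator_of_mem h, smul_eq_mul, ← pow_sub_one_mul hn.ne' r]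
        field_simp
      · simp [indicator_of_notMem h]
    _ = ∫ r in Icc A R, r⁻¹ := by
      rw [setIntegral_indicator measurableSet_Icc,
        inter_eq_right.2 fun r hr ↦ mem_Ioi.2 (hA.trans_le hr.1)]
  have hS : MeasurableSet {x : E | A ≤ ‖x‖ ∧ ‖x‖ ≤ R} :=
    measurableSet_Icc.preimage continuous_norm.measurable
  rw [← integral_indicator hS,
    funext hind, integral_fun_norm_addHaar, hradial,
    integral_Icc_eq_integral_Ioc, ← intervalIntegral.integral_of_le hAR,
    integral_inv_of_pos hA (hA.trans_le hAR), nsmul_eq_mul, smul_eq_mul, mul_assoc]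

theorem le_setIntegral_shell {f : E → ℝ} {A R c K : ℝ} (hA : 0 < A) (hAR : A ≤ R) (hc : 0 ≤ c)
    (hf : AEStronglyMeasurable f μ)
    (hbd : ∀ x : E, A ≤ ‖x‖ → c / ‖x‖ ^ Module.finrank ℝ E ≤ f x ∧ f x ≤ K) :
    c * Module.finrank ℝ E * μ.real (ball 0 1) * Real.log (R / A) ≤
      ∫ x in {x : E | A ≤ ‖x‖ ∧ ‖x‖ ≤ R}, f x ∂μ := by
  have hS : MeasurableSet {x : E | A ≤ ‖x‖ ∧ ‖x‖ ≤ R} :=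
    measurableSet_Icc.preimage continuous_norm.measurable
  have hlow : ∀ x ∈ {x : E | A ≤ ‖x‖ ∧ ‖x‖ ≤ R}, c * (‖x‖ ^ Module.finrank ℝ E)⁻¹ ≤ f x :=
    fun x hx ↦ (div_eq_mul_inv c _ ▸ hbd x hx.1).1
  have hfint : IntegrableOn f {x : E | A ≤ ‖x‖ ∧ ‖x‖ ≤ R} μ := by
    refine Measure.integrableOn_of_bounded (M := K) ?_ hf ((ae_restrict_iff' hS).2 ?_)
    · exact (measure_mono fun x hx ↦ mem_closedBall_zero_iff.2 hx.2).trans_lt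
        measure_closedBall_lt_top |>.ne
    · refine ae_of_all _ fun x hx ↦ ?_
      have hf0 : 0 ≤ f x := le_trans (by have := hA.trans_le hx.1; positivity) (hlow x hx)
      rw [Real.norm_eq_abs, abs_of_nonneg hf0]
      exact (hbd x hx.1).2
  rw [mul_assoc, mul_assoc, ← mul_assoc (Module.finrank ℝ E : ℝ),
    ← setIntegral_shell_inv_norm_pow_finrank μ hA hAR,
    ← integral_const_mul]
  refine integral_mono_of_nonneg ((ae_restrict_iff' hS).2 (ae_of_all _ fun x hx ↦ ?_)) hfint
    ((ae_restrict_iff' hS).2 (ae_of_all _ hlow))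
  have := hA.trans_le hx.1
  positivity

theorem log_le_setIntegral_shell_and_not_integrable {F : Type*} [NormedAddCommGroup F] {f : E → F}
    {A c K : ℝ} (hA : 0 < A) (hc : 0 < c) (hf : AEStronglyMeasurable f μ)
    (hbd : ∀ x : E, A ≤ ‖x‖ → c / ‖x‖ ^ Module.finrank ℝ E ≤ ‖f x‖ ∧ ‖f x‖ ≤ K) :
    (∃ c' : ℝ, 0 < c' ∧ ∃ R₁ : ℝ, ∀ R : ℝ, R₁ ≤ R →
      c' * Real.log (R / A) ≤ ∫ x in {x : E | A ≤ ‖x‖ ∧ ‖x‖ ≤ R}, ‖f x‖ ∂μ) ∧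
    ¬ Integrable f μ := by
  have hc' : 0 < c * Module.finrank ℝ E * μ.real (ball 0 1) := by
    have := Module.finrank_pos (R := ℝ) (M := E)
    have := ENNReal.toReal_pos (measure_ball_pos μ (0 : E) one_pos).ne' measure_ball_lt_top.ne
    positivity
  have hlow := fun R (hR : A ≤ R) ↦ le_setIntegral_shell μ hA hR hc.le hf.norm hbd
  refine ⟨⟨_, hc', A, hlow⟩, not_integrable_of_tendsto_setIntegral_norm
    (tendsto_atTop_mono' atTop ((eventually_ge_atTop A).mono hlow) ?_)⟩
  exact (tendsto_log_atTop.comp (tendsto_id.atTop_div_const hA)).const_mul_atTop hc'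

end Shell

theorem integral_mul_mem_Icc {α : Type*} [MeasurableSpace α] {μ : Measure α} {w k : α → ℝ}
    {lo hi : ℝ} (hw : Integrable w μ) (hw0 : ∀ a, 0 ≤ w a) (hk : AEStronglyMeasurable k μ)
    (hlo : 0 ≤ lo) (hwk : ∀ᵐ a ∂μ, w a ≠ 0 → k a ∈ Icc lo hi) :
    ∫ a, w a * k a ∂μ ∈ Icc (lo * ∫ a, w a ∂μ) (hi * ∫ a, w a ∂μ) := by
  have hbd : ∀ᵐ a ∂μ, lo * w a ≤ w a * k a ∧ w a * k a ≤ hi * w a := by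
    filter_upwards [hwk] with a ha
    rcases eq_or_ne (w a) 0 with h0 | h0
    · simp [h0]
    · obtain ⟨hlo', hhi⟩ := ha h0
      constructor <;> nlinarith [hw0 a]
  have hint : Integrable (fun a ↦ w a * k a) μ := by
    refine (hw.const_mul hi).mono' (hw.aestronglyMeasurable.mul hk) ?_
    filter_upwards [hbd] with a ha
    rw [Real.norm_eq_abs, abs_le]
    constructor <;> nlinarith [mul_nonneg hlo (hw0 a)]
  rw [← integral_const_mul, ← integral_const_mul]
  exact ⟨integral_mono_ae (hw.const_mul lo) hint (hbd.mono fun _ ↦ And.left),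
    integral_mono_ae hint (hw.const_mul hi) (hbd.mono fun _ ↦ And.right)⟩

theorem inv_pow_three_le_div_pow_four_sub {a b : ℝ} (hb : 0 ≤ b) (hba : b < a) :
    (a ^ 3)⁻¹ ≤ a / (a ^ 4 - b ^ 4) := by
  have ha : 0 < a := hb.trans_lt hba
  have hden : 0 < a ^ 4 - b ^ 4 := sub_pos.2 (pow_lt_pow_left₀ hba hb four_ne_zero)
  rw [inv_le_comm₀ (by positivity) (by positivity), inv_div, div_le_iff₀ ha]
  nlinarith [pow_nonneg hb 4]

theorem div_pow_four_sub_le_two {a b : ℝ} (hb : 0 ≤ b) (hba : 2 * b ≤ a) (ha : 1 ≤ a) :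
    a / (a ^ 4 - b ^ 4) ≤ 2 := by
  have hb4 : 16 * b ^ 4 ≤ a ^ 4 := calc
    16 * b ^ 4 = (2 * b) ^ 4 := by ring
    _ ≤ a ^ 4 := pow_le_pow_left₀ (by positivity) hba 4
  have ha4 : a ≤ a ^ 4 := le_self_pow₀ ha four_ne_zero
  rw [div_le_iff₀ (by nlinarith)]
  nlinarith

section Kernel

variable {E : Type*} [NormedAddCommGroup E]

/-- The integrand of `𝔾 x y` with the weight `|V u₁ * V u₂|` factored out. -/
def kernelG (x y : E) (u : E × E) : ℝ :=
  ‖x - u.1‖ * (if (1 : ℝ) ≤ |‖x - u.1‖ - ‖y - u.2‖| then 1 else 0) /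
    (‖x - u.1‖ ^ 4 - ‖y - u.2‖ ^ 4)

theorem Measurable.kernelG [MeasurableSpace E] [BorelSpace E] [SecondCountableTopology E]
    {α : Type*} [MeasurableSpace α] {x y : α → E} {u : α → E × E} (hx : Measurable x)
    (hy : Measurable y) (hu : Measurable u) :
    Measurable fun a ↦ _root_.kernelG (x a) (y a) (u a) := by
  have h₁ : Measurable fun a ↦ ‖x a - (u a).1‖ := (hx.sub hu.fst).norm
  have h₂ : Measurable fun a ↦ ‖y a - (u a).2‖ := (hy.sub hu.snd).norm
  refine (h₁.mul (Measurable.ite ?_ measurable_const measurable_const)).div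
    ((h₁.pow_const 4).sub (h₂.pow_const 4))
  exact measurableSet_le measurable_const (h₁.sub h₂).abs

theorem kernelG_mem_Icc {R₀ : ℝ} (hR₀ : 0 ≤ R₀) {x y : E} {u : E × E}
    (hx : 3 * R₀ + 2 ≤ ‖x‖) (hy : ‖y‖ ≤ 1) (hu₁ : ‖u.1‖ ≤ R₀) (hu₂ : ‖u.2‖ ≤ R₀) :
    kernelG x y u ∈ Icc (8 * ‖x‖ ^ 3)⁻¹ 2 := by
  have ha : ‖x‖ - R₀ ≤ ‖x - u.1‖ := by linarith [norm_sub_norm_le x u.1]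
  have ha' : ‖x - u.1‖ ≤ 2 * ‖x‖ := by linarith [norm_sub_le x u.1]
  have hb : ‖y - u.2‖ ≤ 1 + R₀ := by linarith [norm_sub_le y u.2]
  have hb0 : 0 ≤ ‖y - u.2‖ := norm_nonneg _
  have hind : (1 : ℝ) ≤ |‖x - u.1‖ - ‖y - u.2‖| := by
    rw [le_abs]; left; linarith
  rw [kernelG, if_pos hind, mul_one]
  refine ⟨le_trans ?_ (inv_pow_three_le_div_pow_four_sub hb0 (by linarith)),
    div_pow_four_sub_le_two hb0 (by linarith) (by linarith)⟩
  rw [show 8 * ‖x‖ ^ 3 = (2 * ‖x‖) ^ 3 by ring]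
  exact inv_anti₀ (pow_pos (by linarith) 3) (pow_le_pow_left₀ (by linarith) ha' 3)

end Kernel

section Potential

variable {E : Type*} [MeasurableSpace E] {μ : Measure E} {V : E → ℝ}

theorem integral_abs_mul_prod [SFinite μ] :
    ∫ u, |V u.1 * V u.2| ∂(μ.prod μ) = (∫ v, |V v| ∂μ) ^ 2 := by
  simp_rw [abs_mul]
  rw [integral_prod_mul (fun v ↦ |V v|) (fun v ↦ |V v|), sq]

theorem MeasureTheory.Integrable.abs_mul_prod (hV : Integrable V μ) :
    Integrable (fun u : E × E ↦ |V u.1 * V u.2|) (μ.prod μ) := by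
  simpa only [abs_mul] using hV.abs.mul_prod hV.abs

theorem MeasureTheory.AEStronglyMeasurable.integral_abs_mul_prod_mul {α : Type*}
    [MeasurableSpace α] {ν : Measure α} [SFinite ν] [SFinite μ] (hV : AEStronglyMeasurable V μ)
    {k : α × (E × E) → ℝ} (hk : Measurable k) :
    AEStronglyMeasurable (fun a ↦ ∫ u, |V u.1 * V u.2| * k (a, u) ∂(μ.prod μ)) ν := by
  have hw : AEStronglyMeasurable (fun u : E × E ↦ |V u.1 * V u.2|) (μ.prod μ) :=
    continuous_abs.comp_aestronglyMeasurable (hV.comp_fst.mul hV.comp_snd)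
  exact (hw.comp_snd.mul hk.aestronglyMeasurable).integral_prod_right'

variable [NormedAddCommGroup E] [BorelSpace E] [SecondCountableTopology E] [SFinite μ] {R₀ : ℝ}

theorem integral_abs_mul_kernelG_mem_Icc (hV : Integrable V μ) (hR₀ : 0 ≤ R₀)
    (hsupp : ∀ v : E, R₀ < ‖v‖ → V v = 0) {x y : E} (hx : 3 * R₀ + 2 ≤ ‖x‖) (hy : ‖y‖ ≤ 1) :
    ∫ u, |V u.1 * V u.2| * kernelG x y u ∂(μ.prod μ) ∈
      Icc ((8 * ‖x‖ ^ 3)⁻¹ * (∫ v, |V v| ∂μ) ^ 2) (2 * (∫ v, |V v| ∂μ) ^ 2) := by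
  rw [← integral_abs_mul_prod]
  refine integral_mul_mem_Icc hV.abs_mul_prod (fun _ ↦ abs_nonneg _)
    (measurable_const.kernelG measurable_const measurable_id).aestronglyMeasurable (by positivity)
    (ae_of_all _ fun u hu ↦ ?_)
  obtain ⟨h₁, h₂⟩ := mul_ne_zero_iff.1 (abs_ne_zero.1 hu)
  exact kernelG_mem_Icc hR₀ hx hy (not_lt.1 (mt (hsupp _) h₁)) (not_lt.1 (mt (hsupp _) h₂))

variable (μ V) in
/-- `T_𝔾 f₁` without the constant factor in front of the integral defining `𝔾`. -/
def kernelGBallIntegral (x : E) : ℝ :=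
  ∫ y in closedBall 0 1, ∫ u, |V u.1 * V u.2| * kernelG x y u ∂(μ.prod μ) ∂μ

theorem aestronglyMeasurable_kernelGBallIntegral (hV : AEStronglyMeasurable V μ) :
    AEStronglyMeasurable (kernelGBallIntegral μ V) μ :=
  (hV.integral_abs_mul_prod_mul (ν := μ.prod (μ.restrict (closedBall 0 1)))
    (measurable_fst.fst.kernelG measurable_fst.snd measurable_snd)).integral_prod_right'

variable [ProperSpace E] [IsFiniteMeasureOnCompacts μ]

theorem kernelGBallIntegral_mem_Icc (hV : Integrable V μ) (hR₀ : 0 ≤ R₀)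
    (hsupp : ∀ v : E, R₀ < ‖v‖ → V v = 0) {x : E} (hx : 3 * R₀ + 2 ≤ ‖x‖) :
    kernelGBallIntegral μ V x ∈
      Icc ((8 * ‖x‖ ^ 3)⁻¹ * (∫ v, |V v| ∂μ) ^ 2 * μ.real (closedBall 0 1))
        (2 * (∫ v, |V v| ∂μ) ^ 2 * μ.real (closedBall 0 1)) := by
  have : IsFiniteMeasure (μ.restrict (closedBall 0 1)) :=
    isFiniteMeasure_restrict.2 measure_closedBall_lt_top.ne
  have hI := hV.aestronglyMeasurable.integral_abs_mul_prod_mul (ν := μ.restrict (closedBall 0 1))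
    (measurable_const.kernelG measurable_fst measurable_snd : Measurable fun q : E × (E × E) ↦
      kernelG x q.1 q.2)
  have := integral_mul_mem_Icc (integrable_const (1 : ℝ)) (fun _ ↦ zero_le_one) hI
    (by positivity) ((ae_restrict_iff' measurableSet_closedBall).2 (ae_of_all _ fun y hy _ ↦
      integral_abs_mul_kernelG_mem_Icc hV hR₀ hsupp hx (mem_closedBall_zero_iff.1 hy)))
  simpa only [kernelGBallIntegral, one_mul, setIntegral_const, smul_eq_mul, mul_one] using this

end Potential

open Complex in
/-- Unboundedness on `L¹` of the main singular part `T_𝔾` of the low-energy wave operator: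
for a compactly supported nontrivial `V`, `T_𝔾 f₁` (with `f₁ = χ_{B(0,1)}`) has logarithmically
divergent `L¹` mass on large shells, hence is not integrable. -/
theorem TG_not_L1 (R₀ : ℝ) (hR₀ : 1 ≤ R₀) (V : E3 → ℝ)
    (hV : Integrable V volume) (hsupp : ∀ x : E3, R₀ < ‖x‖ → V x = 0)
    (hne : (0 : ℝ) < ∫ x : E3, |V x|)
    (𝔾 : E3 → E3 → ℂ)
    (h𝔾 : ∀ x y : E3, 𝔾 x y =
      ((-1 - Complex.I) / (4 * (π : ℂ) * ((∫ u : E3, |V u| : ℝ) : ℂ) ^ 2)) *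
        ((∫ u : E3 × E3,
            |V u.1 * V u.2| * ‖x - u.1‖ * (if (1 : ℝ) ≤ |‖x - u.1‖ - ‖y - u.2‖| then 1 else 0) /
              (‖x - u.1‖ ^ 4 - ‖y - u.2‖ ^ 4) : ℝ) : ℂ))
    (Tf₁ : E3 → ℂ)
    (hTf₁ : ∀ x : E3, Tf₁ x = ∫ y in {y : E3 | ‖y‖ ≤ 1}, 𝔾 x y) :
    (∃ c : ℝ, 0 < c ∧ ∃ R₁ : ℝ, ∀ R : ℝ, R₁ ≤ R →
      c * Real.log (R / (3 * R₀ + 2)) ≤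
        ∫ x in {x : E3 | 3 * R₀ + 2 ≤ ‖x‖ ∧ ‖x‖ ≤ R}, ‖Tf₁ x‖) ∧
    ¬ Integrable Tf₁ volume := by
  have hA : 0 < 3 * R₀ + 2 := by linarith
  set M := ∫ x : E3, |V x|
  set C : ℂ := (-1 - Complex.I) / (4 * (π : ℂ) * (M : ℂ) ^ 2)
  have hTf : Tf₁ = fun x ↦ C * kernelGBallIntegral volume V x := by
    funext x
    have hB : {y : E3 | ‖y‖ ≤ 1} = closedBall 0 1 := by ext; simp
    have hF : ∀ y (u : E3 × E3), |V u.1 * V u.2| * ‖x - u.1‖ *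
        (if (1 : ℝ) ≤ |‖x - u.1‖ - ‖y - u.2‖| then 1 else 0) / (‖x - u.1‖ ^ 4 - ‖y - u.2‖ ^ 4) =
        |V u.1 * V u.2| * kernelG x y u := fun _ _ ↦ by rw [kernelG]; ring
    simp_rw [hTf₁, hB, h𝔾, hF, integral_const_mul, integral_complex_ofReal]
    rfl
  have hmeas : AEStronglyMeasurable Tf₁ volume := hTf ▸ aestronglyMeasurable_const.mul
    (continuous_ofReal.comp_aestronglyMeasurable
      (aestronglyMeasurable_kernelGBallIntegral hV.aestronglyMeasurable))
  have hC : 0 < ‖C‖ := norm_pos_iff.2 (by simp [C, Complex.ext_iff, hne.ne', pi_ne_zero])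
  set b := volume.real (closedBall (0 : E3) 1)
  have hb : 0 < b :=
    ENNReal.toReal_pos (measure_closedBall_pos _ _ one_pos).ne' measure_closedBall_lt_top.ne
  refine log_le_setIntegral_shell_and_not_integrable volume hA (c := ‖C‖ * M ^ 2 * b / 8)
    (K := ‖C‖ * (2 * M ^ 2 * b)) (by positivity) hmeas fun x hx ↦ ?_
  obtain ⟨hlo, hhi⟩ := kernelGBallIntegral_mem_Icc hV (zero_le_one.trans hR₀) hsupp hx
  have hx0 : 0 < ‖x‖ := hA.trans_le hx
  rw [hTf, norm_mul, norm_real, Real.norm_of_nonneg (le_trans (by positivity) hlo),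
    finrank_euclideanSpace_fin]
  refine ⟨?_, mul_le_mul_of_nonneg_left hhi hC.le⟩
  calc ‖C‖ * M ^ 2 * b / 8 / ‖x‖ ^ 3 = ‖C‖ * ((8 * ‖x‖ ^ 3)⁻¹ * M ^ 2 * b) := by field_simp
    _ ≤ _ := mul_le_mul_of_nonneg_left hlo hC.le
end
end
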